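/- For all n ≥ 0, t(n) ≥ 0. -/

import Mathlib

def rs : ℕ → ℤ
  | 0 => 1
  | (n+1) =>
    if (n+1) % 2 = 0 then rs ((n+1)/2)
    else (-1)^((n+1)/2) * rs ((n+1)/2)
decreasing_by all_goals exact Nat.div_lt_self (Nat.succ_pos n) (by norm_num)

def s (n : ℕ) : ℤ := ∑ i ∈ Finset.range (n+1), rs i

def t (n : ℕ) : ℤ := ∑ i ∈ Finset.range (n+1), (-1)^i * rs i

/-!
On a block `4n, …, 4n+3` the sequence is `rs n • (1, 1, ε, -ε)` with `ε = (-1)^n`, so the signed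
terms are `rs n • (1, -1, ε, ε)`. Hence `T m`, the sum of the first `m` signed terms, satisfies
`T (4n) = T (4n+2) = 2 T n`, `T (4n+1) = 2 T n + rs n` and `T (4n+3) = 2 T n + ε rs n`.
These stay nonnegative as long as every zero `T m = 0` is followed by a positive term, and that
property propagates through the recursion once one knows `T m ≡ m mod 2`, so that zeros sit at
even `m`.
-/

open Finset

lemma rs_zero : rs 0 = 1 := by
  rw [rs]

lemma rs_two_mul (n : ℕ) : rs (2 * n) = rs n := by
  cases n with
  | zero => rfl
  | succ m =>
    rw [show 2 * (m + 1) = (2 * m + 1) + 1 by ring, rs, if_pos (by omega)]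
    congr 1
    omega

lemma rs_two_mul_add_one (n : ℕ) : rs (2 * n + 1) = (-1) ^ n * rs n := by
  rw [rs, if_neg (by omega), show (2 * n + 1) / 2 = n by omega]

lemma rs_eq_one_or_eq_neg_one (n : ℕ) : rs n = 1 ∨ rs n = -1 := by
  induction n using Nat.strong_induction_on with
  | _ n ih =>
    obtain ⟨m, rfl | rfl⟩ := Nat.even_or_odd' n
    · rcases Nat.eq_zero_or_pos m with rfl | hm
      · exact .inl rs_zero
      · rw [rs_two_mul]
        exact ih m (by omega)
    · rw [rs_two_mul_add_one]
      rcases neg_one_pow_eq_or ℤ m with h | h <;> rcases ih m (by omega) with h' | h' <;>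
        simp [h, h']

lemma rs_four_mul (n : ℕ) : rs (4 * n) = rs n := by
  rw [show 4 * n = 2 * (2 * n) by ring, rs_two_mul, rs_two_mul]

lemma rs_four_mul_add_one (n : ℕ) : rs (4 * n + 1) = rs n := by
  rw [show 4 * n + 1 = 2 * (2 * n) + 1 by ring, rs_two_mul_add_one, rs_two_mul, pow_mul]
  simp

lemma rs_four_mul_add_two (n : ℕ) : rs (4 * n + 2) = (-1) ^ n * rs n := by
  rw [show 4 * n + 2 = 2 * (2 * n + 1) by ring, rs_two_mul, rs_two_mul_add_one]

lemma rs_four_mul_add_three (n : ℕ) : rs (4 * n + 3) = -((-1) ^ n * rs n) := by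
  rw [show 4 * n + 3 = 2 * (2 * n + 1) + 1 by ring, rs_two_mul_add_one, rs_two_mul_add_one,
    pow_succ, pow_mul]
  simp

/-- `rsAltSum (n + 1) = t n`; starting the sum at the empty prefix makes the recursion base 4 clean. -/
def rsAltSum (n : ℕ) : ℤ := ∑ i ∈ range n, (-1) ^ i * rs i

lemma rsAltSum_succ (n : ℕ) : rsAltSum (n + 1) = rsAltSum n + (-1) ^ n * rs n :=
  sum_range_succ _ _

lemma rsAltSum_even_iff (n : ℕ) : Even (rsAltSum n) ↔ Even n := by
  induction n with
  | zero => simp [rsAltSum]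
  | succ n ih =>
    have hterm : ¬Even ((-1) ^ n * rs n) := by
      rcases rs_eq_one_or_eq_neg_one n with h | h <;> simp [h, Int.even_pow]
    rw [rsAltSum_succ, Int.even_add, ih, Nat.even_add_one]
    tauto

lemma rsAltSum_four_mul_add_one (n : ℕ) : rsAltSum (4 * n + 1) = rsAltSum (4 * n) + rs n := by
  rw [rsAltSum_succ, rs_four_mul]
  simp [pow_mul]

lemma rsAltSum_four_mul_add_two (n : ℕ) : rsAltSum (4 * n + 2) = rsAltSum (4 * n) := by
  rw [rsAltSum_succ, rsAltSum_four_mul_add_one, rs_four_mul_add_one]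
  simp [pow_add, pow_mul]

lemma rsAltSum_four_mul_add_three (n : ℕ) :
    rsAltSum (4 * n + 3) = rsAltSum (4 * n) + (-1) ^ n * rs n := by
  rw [rsAltSum_succ, rsAltSum_four_mul_add_two, rs_four_mul_add_two]
  simp [pow_add, pow_mul]

lemma rsAltSum_four_mul (n : ℕ) : rsAltSum (4 * n) = 2 * rsAltSum n := by
  induction n with
  | zero => simp [rsAltSum]
  | succ n ih =>
    rw [show 4 * (n + 1) = 4 * n + 3 + 1 by ring, rsAltSum_succ, rsAltSum_four_mul_add_three,
      rs_four_mul_add_three, ih, rsAltSum_succ]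
    simp [pow_add, pow_mul]
    ring

lemma two_mul_add_pos {T c : ℤ} (hT : 0 ≤ T) (hc : -1 ≤ c) (hc_one : T = 0 → c = 1) :
    0 < 2 * T + c := by
  omega

lemma rsAltSum_nonneg_and_rs_eq_one_of_eq_zero (n : ℕ) :
    0 ≤ rsAltSum n ∧ (rsAltSum n = 0 → rs n = 1) := by
  induction n using Nat.strong_induction_on with
  | _ n ih =>
    rcases Nat.eq_zero_or_pos n with rfl | hn
    · simp [rsAltSum, rs_zero]
    obtain ⟨q, hq⟩ : ∃ q, n = 4 * q ∨ n = 4 * q + 1 ∨ n = 4 * q + 2 ∨ n = 4 * q + 3 :=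
      ⟨n / 4, by omega⟩
    obtain ⟨hpos, hzero⟩ := ih q (by omega)
    have hrs := rs_eq_one_or_eq_neg_one q
    have hsigned_zero : rsAltSum q = 0 → (-1) ^ q * rs q = 1 := fun h => by
      rw [((rsAltSum_even_iff q).mp (h ▸ Even.zero)).neg_one_pow, hzero h, one_mul]
    rcases hq with rfl | rfl | rfl | rfl
    · rw [rsAltSum_four_mul, rs_four_mul]
      exact ⟨by omega, fun h => hzero (by omega)⟩
    · rw [rsAltSum_four_mul_add_one, rsAltSum_four_mul]
      have := two_mul_add_pos hpos (by omega) hzero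
      exact ⟨this.le, fun h => absurd h this.ne'⟩
    · rw [rsAltSum_four_mul_add_two, rsAltSum_four_mul, rs_four_mul_add_two]
      exact ⟨by omega, fun h => hsigned_zero (by omega)⟩
    · rw [rsAltSum_four_mul_add_three, rsAltSum_four_mul]
      have hsigned : -1 ≤ (-1) ^ q * rs q := by
        rcases neg_one_pow_eq_or ℤ q with h | h <;> rw [h] <;> omega
      have := two_mul_add_pos hpos hsigned hsigned_zero
      exact ⟨this.le, fun h => absurd h this.ne'⟩

theorem stmt5 : ∀ n : ℕ, 0 ≤ t n := fun n => (rsAltSum_nonneg_and_rs_eq_one_of_eq_zero (n + 1)).1
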